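/- arXiv:1907.02296 — 3 statements merged into one kernel-verified Lean document; each statement's English description precedes it below -/
import Mathlib

section
/- Commutativity on local zones: if dom(a) ∩ dom(b) = ∅ and (q,Z) =ab=> (q',Z') in the local zone graph, then (q,Z) =ba=> (q',Z') — the same state and the exact same local zone are reached. -/
open Classical

/-- Comparison operators appearing in guards `x ~ c`. -/
inductive Cmp | lt | le | eq | ge | gt

def Cmp.sat : Cmp → ℝ → ℤ → Prop
  | .lt, r, c => r < (c : ℝ)
  | .le, r, c => r ≤ (c : ℝ)
  | .eq, r, c => r = (c : ℝ)
  | .ge, r, c => (c : ℝ) ≤ r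
  | .gt, r, c => (c : ℝ) < r

/-- A guard: a finite conjunction of constraints `x ~ c` on clocks. -/
abbrev Guard (Clock : Type) := List (Clock × Cmp × ℤ)

/-- A difference constraint `y₁ - y₂ ◁ c` over variables `V`;
the boolean is `true` for strict `<` and `false` for `≤`. -/
abbrev DiffConstraint (V : Type) := V × V × Bool × ℤ

/-- Satisfaction of a difference constraint. -/
def csat {V : Type} (v : V → ℝ) (c : DiffConstraint V) : Prop :=
  if c.2.2.1 then v c.1 - v c.2.1 < (c.2.2.2 : ℝ) else v c.1 - v c.2.1 ≤ (c.2.2.2 : ℝ)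

/-- A network of timed automata: `k` processes, each owning its clocks and
locations; each action `b` has a domain `dom b` of synchronizing processes, and
for each process in the domain a set of `b`-transitions (location, guard, reset
set, target location), whose guards and resets only mention own clocks. -/
structure Network where
  k : ℕ
  kpos : 0 < k
  Clock : Type
  [clockFin : Fintype Clock]
  owner : Clock → Fin k
  Act : Type
  dom : Act → Finset (Fin k)
  Loc : Fin k → Type
  init : ∀ p, Loc p
  Trans : ∀ (_ : Act) (p : Fin k), Set (Loc p × Guard Clock × Set Clock × Loc p)
  trans_wf : ∀ b p tr, tr ∈ Trans b p →
    (∀ c ∈ tr.2.1, owner c.1 = p) ∧ (∀ x ∈ tr.2.2.1, owner x = p)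

attribute [instance] Network.clockFin

namespace Network

variable (N : Network)

/-- Global (discrete) states of the network. -/
abbrev State := ∀ p, N.Loc p

/-- Variables of local valuations: offset variables `x̃` and reference clocks `t_p`. -/
abbrev LVar := N.Clock ⊕ Fin N.k

/-- Variables of global valuations: offset variables `x̃` and the global reference clock `t`. -/
abbrev GVar := N.Clock ⊕ Unit

abbrev LVal := N.LVar → ℝ

abbrev GVal := N.GVar → ℝ

/-- A local valuation: nonnegative, and each offset is below the owner's reference clock. -/
def IsLVal (v : N.LVal) : Prop :=
  (∀ y, 0 ≤ v y) ∧ ∀ x : N.Clock, v (.inl x) ≤ v (.inr (N.owner x))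

/-- A global valuation: nonnegative, and each offset is below the global time `t`. -/
def IsGVal (v : N.GVal) : Prop :=
  (∀ y, 0 ≤ v y) ∧ ∀ x : N.Clock, v (.inl x) ≤ v (.inr ())

/-- Satisfaction of a guard by a local valuation: the value of clock `x` is
`v t_p - v x̃` where `p` owns `x`. -/
def lgsat (v : N.LVal) (g : Guard N.Clock) : Prop :=
  ∀ c ∈ g, Cmp.sat c.2.1 (v (.inr (N.owner c.1)) - v (.inl c.1)) c.2.2

/-- Satisfaction of a guard by a global valuation: the value of clock `x` is `v t - v x̃`. -/
def ggsat (v : N.GVal) (g : Guard N.Clock) : Prop :=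
  ∀ c ∈ g, Cmp.sat c.2.1 (v (.inr ()) - v (.inl c.1)) c.2.2

/-- Global delay: only the global reference clock advances. -/
def gdelay (v : N.GVal) (δ : ℝ) : N.GVal :=
  fun y => match y with
    | .inl x => v (.inl x)
    | .inr _ => v (.inr ()) + δ

/-- `v'` is obtained from `v` by a (finite) sequence of local delays; equivalently,
each reference clock advances by some nonnegative amount, offsets are unchanged. -/
def ldelayed (v v' : N.LVal) : Prop :=
  ∃ δ : Fin N.k → ℝ, (∀ p, 0 ≤ δ p) ∧
    v' = fun y => match y with
      | .inl x => v (.inl x)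
      | .inr p => v (.inr p) + δ p

/-- Reset of the clocks in `R` in a global valuation. -/
noncomputable def greset (R : Set N.Clock) (v : N.GVal) : N.GVal :=
  fun y => match y with
    | .inl x => if x ∈ R then v (.inr ()) else v (.inl x)
    | .inr u => v (.inr u)

/-- Reset of the clocks in `R` in a local valuation: `x̃` is set to the local
time of the process owning `x`. -/
noncomputable def lreset (R : Set N.Clock) (v : N.LVal) : N.LVal :=
  fun y => match y with
    | .inl x => if x ∈ R then v (.inr (N.owner x)) else v (.inl x)
    | .inr p => v (.inr p)

/-- Global action step on action `b`. -/
def gact (b : N.Act) (c c' : N.State × N.GVal) : Prop :=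
  ∃ tr : ∀ p, p ∈ N.dom b → N.Loc p × Guard N.Clock × Set N.Clock × N.Loc p,
    (∀ p (h : p ∈ N.dom b),
      tr p h ∈ N.Trans b p ∧ (tr p h).1 = c.1 p ∧ (tr p h).2.2.2 = c'.1 p) ∧
    (∀ p, p ∉ N.dom b → c'.1 p = c.1 p) ∧
    (∀ p (h : p ∈ N.dom b), N.ggsat c.2 (tr p h).2.1) ∧
    c'.2 = N.greset {x | ∃ p h, x ∈ (tr p h).2.2.1} c.2

/-- Local action step on action `b`: additionally the reference clocks of the
processes in `dom b` must agree. -/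
def lact (b : N.Act) (c c' : N.State × N.LVal) : Prop :=
  ∃ tr : ∀ p, p ∈ N.dom b → N.Loc p × Guard N.Clock × Set N.Clock × N.Loc p,
    (∀ p (h : p ∈ N.dom b),
      tr p h ∈ N.Trans b p ∧ (tr p h).1 = c.1 p ∧ (tr p h).2.2.2 = c'.1 p) ∧
    (∀ p, p ∉ N.dom b → c'.1 p = c.1 p) ∧
    (∀ p ∈ N.dom b, ∀ p' ∈ N.dom b, c.2 (.inr p) = c.2 (.inr p')) ∧
    (∀ p (h : p ∈ N.dom b), N.lgsat c.2 (tr p h).2.1) ∧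
    c'.2 = N.lreset {x | ∃ p h, x ∈ (tr p h).2.2.1} c.2

/-- Global run on a word of actions: delays and action steps alternate,
starting and ending with a (possibly zero) delay. -/
inductive GRun : List N.Act → (N.State × N.GVal) → (N.State × N.GVal) → Prop
  | nil {q v} (δ : ℝ) (hδ : 0 ≤ δ) : GRun [] (q, v) (q, N.gdelay v δ)
  | cons {b u q v c1 c2} (δ : ℝ) (hδ : 0 ≤ δ)
      (hb : N.gact b (q, N.gdelay v δ) c1) (h : GRun u c1 c2) :
      GRun (b :: u) (q, v) c2

/-- Local run on a word of actions: sequences of local delays and local action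
steps alternate. -/
inductive LRun : List N.Act → (N.State × N.LVal) → (N.State × N.LVal) → Prop
  | nil {q v v'} (hd : N.ldelayed v v') : LRun [] (q, v) (q, v')
  | cons {b u q v v1 c1 c2} (hd : N.ldelayed v v1)
      (hb : N.lact b (q, v1) c1) (h : LRun u c1 c2) :
      LRun (b :: u) (q, v) c2

/-- Local run recording, for each action, its execution time: the common value
of the reference clocks of `dom b` when the step is taken. -/
inductive LRunT : List (N.Act × ℝ) → (N.State × N.LVal) → (N.State × N.LVal) → Prop
  | nil {q v v'} (hd : N.ldelayed v v') : LRunT [] (q, v) (q, v')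
  | cons {b θ u q v v1 c1 c2} (hd : N.ldelayed v v1)
      (hb : N.lact b (q, v1) c1) (hθ : ∀ p ∈ N.dom b, v1 (.inr p) = θ)
      (h : LRunT u c1 c2) :
      LRunT ((b, θ) :: u) (q, v) c2

/-- Equivalence of action sequences: generated by swapping adjacent actions
with disjoint domains. -/
inductive equiv : List N.Act → List N.Act → Prop
  | swap (u w : List N.Act) (a b : N.Act) (h : Disjoint (N.dom a) (N.dom b)) :
      equiv (u ++ a :: b :: w) (u ++ b :: a :: w)
  | refl (u : List N.Act) : equiv u u
  | trans {u v w} : equiv u v → equiv v w → equiv u w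

/-- A local valuation is synchronized if all reference clocks agree. -/
def Synchronized (v : N.LVal) : Prop :=
  ∀ p p' : Fin N.k, v (.inr p) = v (.inr p')

/-- The global valuation associated to a (synchronized) local valuation. -/
def toGlobal (v : N.LVal) : N.GVal :=
  fun y => match y with
    | .inl x => v (.inl x)
    | .inr _ => v (.inr ⟨0, N.kpos⟩)

/-- The synchronized local valuation associated to a global valuation. -/
def toLocal (v : N.GVal) : N.LVal :=
  fun y => match y with
    | .inl x => v (.inl x)
    | .inr _ => v (.inr ())

/-- The synchronized valuations of a set of local valuations. -/
def syncSet (S : Set N.LVal) : Set N.LVal := {v ∈ S | N.Synchronized v}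

/-- The set of local valuations defined by a list of difference constraints. -/
def lzset (L : List (DiffConstraint N.LVar)) : Set N.LVal :=
  {v | N.IsLVal v ∧ ∀ c ∈ L, csat v c}

/-- The set of global valuations defined by a list of difference constraints. -/
def gzset (L : List (DiffConstraint N.GVar)) : Set N.GVal :=
  {v | N.IsGVal v ∧ ∀ c ∈ L, csat v c}

/-- Local zones: sets of local valuations definable by difference constraints. -/
def IsLZone (S : Set N.LVal) : Prop := ∃ L, S = N.lzset L

/-- Global zones: sets of global valuations definable by difference constraints. -/
def IsGZone (S : Set N.GVal) : Prop := ∃ L, S = N.gzset L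

/-- Local-time elapse of a set of local valuations. -/
def lelapse (S : Set N.LVal) : Set N.LVal := {v' | ∃ v ∈ S, N.ldelayed v v'}

/-- Global time elapse of a set of global valuations. -/
def gelapse (S : Set N.GVal) : Set N.GVal :=
  {v' | ∃ v ∈ S, ∃ δ, 0 ≤ δ ∧ v' = N.gdelay v δ}

/-- Local zone graph step on action `b`:
`Z' = local-elapse([R](Z ∩ Z_g ∩ Z_sync))`, required nonempty. -/
def lzstep (b : N.Act) (c c' : N.State × Set N.LVal) : Prop :=
  ∃ tr : ∀ p, p ∈ N.dom b → N.Loc p × Guard N.Clock × Set N.Clock × N.Loc p,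
    (∀ p (h : p ∈ N.dom b),
      tr p h ∈ N.Trans b p ∧ (tr p h).1 = c.1 p ∧ (tr p h).2.2.2 = c'.1 p) ∧
    (∀ p, p ∉ N.dom b → c'.1 p = c.1 p) ∧
    c'.2 = N.lelapse ((N.lreset {x | ∃ p h, x ∈ (tr p h).2.2.1}) ''
      (c.2 ∩ {v | ∀ p (h : p ∈ N.dom b), N.lgsat v (tr p h).2.1}
           ∩ {v | ∀ p ∈ N.dom b, ∀ p' ∈ N.dom b, v (.inr p) = v (.inr p')})) ∧
    (c'.2).Nonempty

/-- Sequence of local zone graph steps along a word. -/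
inductive LZRun : List N.Act → (N.State × Set N.LVal) → (N.State × Set N.LVal) → Prop
  | nil (c) : LZRun [] c c
  | cons {b u c c1 c2} (hb : N.lzstep b c c1) (h : LZRun u c1 c2) :
      LZRun (b :: u) c c2

/-- The initial (discrete) state of the network. -/
def initState : N.State := N.init

/-- The initial global valuation: everything is `0`. -/
def gvalInit : N.GVal := fun _ => 0

/-- The initial local valuation: everything is `0`. -/
def lvalInit : N.LVal := fun _ => 0

/-- The initial node's zone in the local zone graph. -/
def lzoneInit : Set N.LVal := N.lelapse {N.lvalInit}

/-- State `q` is reachable in the global-time semantics. -/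
def GReach (q : N.State) : Prop :=
  ∃ u v, N.GRun u (N.initState, N.gvalInit) (q, v)

/-- State `q` is reachable in the local-time semantics. -/
def LReach (q : N.State) : Prop :=
  ∃ u v, N.LRun u (N.initState, N.lvalInit) (q, v)

/-- Time-abstract simulation between global valuations. -/
def TASim (sim : N.GVal → N.GVal → Prop) : Prop :=
  ∀ v1 v2, sim v1 v2 → ∀ q b δ1 q' v1', 0 ≤ δ1 →
    N.gact b (q, N.gdelay v1 δ1) (q', v1') →
    ∃ δ2, 0 ≤ δ2 ∧ ∃ v2', N.gact b (q, N.gdelay v2 δ2) (q', v2') ∧ sim v1' v2'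

end Network

/-- A local sync graph over a network `N`, based on an abstraction `abs` over
global zones: a subgraph of the local zone graph with covered/uncovered nodes,
satisfying conditions C0–C4. -/
structure SyncGraph (N : Network) (abs : Set N.GVal → Set N.GVal) where
  nodes : Set (N.State × Set N.LVal)
  covered : N.State × Set N.LVal → Prop
  edges : (N.State × Set N.LVal) → (N.State × Set N.LVal) → Prop
  edges_mem : ∀ s s', edges s s' → s ∈ nodes ∧ s' ∈ nodes
  edges_lzg : ∀ s s', edges s s' → ∃ b, N.lzstep b s s'
  init_mem : (N.initState, N.lzoneInit) ∈ nodes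
  init_unc : ¬ covered (N.initState, N.lzoneInit)
  reach : ∀ s ∈ nodes, Relation.ReflTransGen edges (N.initState, N.lzoneInit) s
  unc_succ : ∀ s ∈ nodes, ¬ covered s → ∀ b s', N.lzstep b s s' → edges s s'
  cov_sub : ∀ s ∈ nodes, covered s → ∃ s' ∈ nodes, ¬ covered s' ∧ s.1 = s'.1 ∧
    N.toGlobal '' N.syncSet s.2 ⊆ abs (N.toGlobal '' N.syncSet s'.2)
  cov_nosucc : ∀ s s', covered s → ¬ edges s s'

/-- A list of difference constraints is canonical (every constraint is tight):
no constraint is implied by the remaining ones. -/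
def canonicalL (N : Network) (L : List (DiffConstraint N.LVar)) : Prop :=
  ∀ c ∈ L, ∃ v, N.IsLVal v ∧ (∀ c' ∈ L, c' ≠ c → csat v c') ∧ ¬ csat v c

/-- Minea's region-like equivalence with maximal constant `cmax`. -/
def regEquiv {V : Type} (cmax : ℤ) (v1 v2 : V → ℝ) : Prop :=
  ∀ a b : V, (⌊v1 a - v1 b⌋ = ⌊v2 a - v2 b⌋) ∨
    (⌊v1 a - v1 b⌋ > cmax ∧ ⌊v2 a - v2 b⌋ > cmax) ∨
    (⌊v1 a - v1 b⌋ < -cmax ∧ ⌊v2 a - v2 b⌋ < -cmax)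

/-! A step of the local zone graph on an action `b` reads and writes only the variables (offsets
and reference clocks) of the processes in `dom b`, and resets never change reference clocks.
Given a run `v ⟶ₐ w ⟶_b v'`, split the local delay after the `a`-step into its part on `dom a`,
which commutes with the `b`-reset and is postponed to the end, and its part off `dom a`, which is
moved to the very beginning: there it stays inside `Z`, since `Z` is closed under local delays.
The `b`-guards see the same values before and after this move, and the `a`-guards the same values
as in `v`, so `v'` is reached along `ba`. This gives `post_b (post_a Z) ⊆ post_a (post_b Z)`,
and equality by symmetry. -/

namespace Network

open Set

variable {N : Network}

variable (N) in
def varOwner : N.LVar → Fin N.k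
  | .inl x => N.owner x
  | .inr p => p

def ldelay (v : N.LVal) (δ : Fin N.k → ℝ) : N.LVal
  | .inl x => v (.inl x)
  | .inr p => v (.inr p) + δ p

@[simp] lemma ldelay_inl (v : N.LVal) (δ : Fin N.k → ℝ) (x : N.Clock) :
    ldelay v δ (.inl x) = v (.inl x) := rfl

@[simp] lemma ldelay_inr (v : N.LVal) (δ : Fin N.k → ℝ) (p : Fin N.k) :
    ldelay v δ (.inr p) = v (.inr p) + δ p := rfl

@[simp] lemma lreset_inl (R : Set N.Clock) (v : N.LVal) (x : N.Clock) :
    N.lreset R v (.inl x) = if x ∈ R then v (.inr (N.owner x)) else v (.inl x) := rfl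

@[simp] lemma lreset_inr (R : Set N.Clock) (v : N.LVal) (p : Fin N.k) :
    N.lreset R v (.inr p) = v (.inr p) := rfl

lemma ldelayed_iff {v w : N.LVal} : N.ldelayed v w ↔ ∃ δ, 0 ≤ δ ∧ w = ldelay v δ := Iff.rfl

lemma ldelay_zero (v : N.LVal) : ldelay v 0 = v := by
  funext y; cases y <;> simp

lemma ldelay_ldelay (v : N.LVal) (δ ε : Fin N.k → ℝ) :
    ldelay (ldelay v δ) ε = ldelay v (δ + ε) := by
  funext y; cases y <;> simp [add_assoc]

lemma lreset_comm (R S : Set N.Clock) (v : N.LVal) :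
    N.lreset R (N.lreset S v) = N.lreset S (N.lreset R v) := by
  funext y
  rcases y with x | p
  · by_cases hR : x ∈ R <;> by_cases hS : x ∈ S <;> simp [hR, hS]
  · rfl

lemma lreset_ldelay {R : Set N.Clock} {δ : Fin N.k → ℝ} (h : ∀ x ∈ R, δ (N.owner x) = 0)
    (v : N.LVal) : N.lreset R (ldelay v δ) = ldelay (N.lreset R v) δ := by
  funext y
  rcases y with x | p
  · by_cases hx : x ∈ R <;> simp [hx, h]
  · rfl

lemma ldelay_eqOn {P : Set (Fin N.k)} {δ : Fin N.k → ℝ} (h : ∀ p ∈ P, δ p = 0) (v : N.LVal) :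
    EqOn (ldelay v δ) v (N.varOwner ⁻¹' P) := by
  rintro (x | p) hp
  · rfl
  · simp [h p hp]

lemma lreset_eqOn {P : Set (Fin N.k)} {R : Set N.Clock} (h : ∀ x ∈ R, N.owner x ∉ P)
    (v : N.LVal) : EqOn (N.lreset R v) v (N.varOwner ⁻¹' P) := by
  rintro (x | p) hx
  · simp [show x ∉ R from fun hR => h x hR hx]
  · rfl

lemma lgsat_of_eqOn {P : Set (Fin N.k)} {g : Guard N.Clock} (hg : ∀ c ∈ g, N.owner c.1 ∈ P)
    {v w : N.LVal} (hvw : EqOn v w (N.varOwner ⁻¹' P)) (hv : N.lgsat v g) : N.lgsat w g := by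
  intro c hc
  rw [← hvw (x := .inr (N.owner c.1)) (hg c hc), ← hvw (x := .inl c.1) (hg c hc)]
  exact hv c hc

abbrev TransFamily (b : N.Act) :=
  ∀ p, p ∈ N.dom b → N.Loc p × Guard N.Clock × Set N.Clock × N.Loc p

variable {a b : N.Act}

def resetSet (tr : N.TransFamily b) : Set N.Clock := {x | ∃ p h, x ∈ (tr p h).2.2.1}

def Enabled (tr : N.TransFamily b) (v : N.LVal) : Prop :=
  (∀ p (h : p ∈ N.dom b), N.lgsat v (tr p h).2.1) ∧
    ∀ p ∈ N.dom b, ∀ p' ∈ N.dom b, v (.inr p) = v (.inr p')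

def zonePost (tr : N.TransFamily b) (Z : Set N.LVal) : Set N.LVal :=
  N.lelapse (N.lreset (resetSet tr) '' {v ∈ Z | Enabled tr v})

def StateStep (tr : N.TransFamily b) (q q' : N.State) : Prop :=
  (∀ p (h : p ∈ N.dom b), tr p h ∈ N.Trans b p ∧ (tr p h).1 = q p ∧ (tr p h).2.2.2 = q' p) ∧
    ∀ p, p ∉ N.dom b → q' p = q p

lemma lzstep_iff {c c' : N.State × Set N.LVal} :
    N.lzstep b c c' ↔
      ∃ tr : N.TransFamily b, StateStep tr c.1 c'.1 ∧ c'.2 = zonePost tr c.2 ∧ c'.2.Nonempty := by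
  simp only [lzstep, StateStep, zonePost, resetSet, Enabled, and_assoc, inter_def, mem_ofPred_eq]

lemma lzRun_pair_iff {c c' : N.State × Set N.LVal} :
    N.LZRun [a, b] c c' ↔ ∃ c₁, N.lzstep a c c₁ ∧ N.lzstep b c₁ c' := by
  constructor
  · rintro (_ | ⟨ha, _ | ⟨hb, ⟨⟩⟩⟩)
    exact ⟨_, ha, hb⟩
  · rintro ⟨c₁, ha, hb⟩
    exact .cons ha (.cons hb (.nil _))

lemma mem_zonePost {tr : N.TransFamily b} {Z : Set N.LVal} {w : N.LVal} :
    w ∈ zonePost tr Z ↔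
      ∃ v ∈ Z, Enabled tr v ∧ ∃ δ, 0 ≤ δ ∧ w = ldelay (N.lreset (resetSet tr) v) δ := by
  simp [zonePost, lelapse, ldelayed_iff, and_assoc]

lemma nonempty_of_zonePost {tr : N.TransFamily b} {Z : Set N.LVal}
    (h : (zonePost tr Z).Nonempty) : Z.Nonempty := by
  obtain ⟨w, hw⟩ := h
  obtain ⟨v, hv, -⟩ := mem_zonePost.1 hw
  exact ⟨v, hv⟩

lemma owner_mem_dom_of_mem_resetSet {tr : N.TransFamily b} (htr : ∀ p h, tr p h ∈ N.Trans b p)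
    {x : N.Clock} (hx : x ∈ resetSet tr) : N.owner x ∈ N.dom b := by
  obtain ⟨p, h, hx⟩ := hx
  rw [(N.trans_wf b p _ (htr p h)).2 x hx]
  exact h

lemma Enabled.of_eqOn {tr : N.TransFamily b} (htr : ∀ p h, tr p h ∈ N.Trans b p) {v w : N.LVal}
    (hvw : EqOn v w (N.varOwner ⁻¹' ↑(N.dom b)))
    (hv : Enabled tr v) : Enabled tr w := by
  refine ⟨fun p h => lgsat_of_eqOn (fun c hc => ?_) hvw (hv.1 p h), fun p hp p' hp' => ?_⟩
  · rw [(N.trans_wf b p _ (htr p h)).1 c hc]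
    exact h
  · rw [← hvw (x := .inr p) hp, ← hvw (x := .inr p') hp']
    exact hv.2 p hp p' hp'

section Swap

variable {P : Set (Fin N.k)} {Ra Rb : Set N.Clock}

lemma ldelay_lreset_split (hRa : ∀ x ∈ Ra, N.owner x ∈ P) (v : N.LVal) (δ : Fin N.k → ℝ) :
    ldelay (N.lreset Ra v) δ = ldelay (N.lreset Ra (ldelay v (Pᶜ.indicator δ))) (P.indicator δ) := by
  rw [lreset_ldelay fun x hx => indicator_of_notMem (notMem_compl_iff.2 (hRa x hx)) δ,
    ldelay_ldelay, indicator_compl_add_self]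

lemma ldelay_lreset_swap (hRa : ∀ x ∈ Ra, N.owner x ∈ P) (hRb : ∀ x ∈ Rb, N.owner x ∉ P)
    (v : N.LVal) (δ ε : Fin N.k → ℝ) :
    ldelay (N.lreset Rb (ldelay (N.lreset Ra v) δ)) ε =
      ldelay (N.lreset Ra (N.lreset Rb (ldelay v (Pᶜ.indicator δ)))) (P.indicator δ + ε) := by
  rw [ldelay_lreset_split hRa, lreset_ldelay fun x hx => indicator_of_notMem (hRb x hx) δ,
    ldelay_ldelay, lreset_comm]

end Swap

lemma zonePost_subset_swap (hd : Disjoint (N.dom a) (N.dom b))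
    {tra : N.TransFamily a} {trb : N.TransFamily b}
    (hwa : ∀ p h, tra p h ∈ N.Trans a p) (hwb : ∀ p h, trb p h ∈ N.Trans b p)
    {Z : Set N.LVal} (hZ : N.lelapse Z ⊆ Z) :
    zonePost trb (zonePost tra Z) ⊆ zonePost tra (zonePost trb Z) := by
  intro v' hv'
  obtain ⟨w, hw, hEb, ε, hε, rfl⟩ := mem_zonePost.1 hv'
  obtain ⟨v, hv, hEa, δ, hδ, rfl⟩ := mem_zonePost.1 hw
  set P : Set (Fin N.k) := ↑(N.dom a)
  have hRa : ∀ x ∈ resetSet tra, N.owner x ∈ P := fun x hx =>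
    owner_mem_dom_of_mem_resetSet hwa hx
  have hRb : ∀ x ∈ resetSet trb, N.owner x ∉ P := fun x hx =>
    Finset.disjoint_right.1 hd (owner_mem_dom_of_mem_resetSet hwb hx)
  have hδP : ∀ s : Set (Fin N.k), 0 ≤ s.indicator δ := fun s => indicator_nonneg fun p _ => hδ p
  set v₁ := ldelay v (Pᶜ.indicator δ)
  have hv₁ : v₁ ∈ Z := hZ ⟨v, hv, _, hδP _, rfl⟩
  have hEb₁ : Enabled trb v₁ := by
    have hbP : (↑(N.dom b) : Set (Fin N.k)) ⊆ Pᶜ := fun p hp => Finset.disjoint_right.1 hd hp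
    have hwv₁ : EqOn (ldelay (N.lreset (resetSet tra) v) δ) v₁ (N.varOwner ⁻¹' Pᶜ) := by
      rw [ldelay_lreset_split hRa]
      exact (ldelay_eqOn (fun p hp => indicator_of_notMem hp δ) _).trans
        (lreset_eqOn (fun x hx => notMem_compl_iff.2 (hRa x hx)) _)
    exact hEb.of_eqOn hwb (hwv₁.mono (preimage_mono hbP))
  have hEa₁ : Enabled tra (N.lreset (resetSet trb) v₁) :=
    hEa.of_eqOn hwa ((lreset_eqOn hRb _).trans
      (ldelay_eqOn (fun p hp => indicator_of_notMem (notMem_compl_iff.2 hp) δ) _)).symm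
  rw [ldelay_lreset_swap hRa hRb]
  refine mem_zonePost.2 ⟨_, ?_, hEa₁, _, add_nonneg (hδP _) hε, rfl⟩
  exact mem_zonePost.2 ⟨v₁, hv₁, hEb₁, 0, le_rfl, (ldelay_zero _).symm⟩

lemma zonePost_comm (hd : Disjoint (N.dom a) (N.dom b))
    {tra : N.TransFamily a} {trb : N.TransFamily b}
    (hwa : ∀ p h, tra p h ∈ N.Trans a p) (hwb : ∀ p h, trb p h ∈ N.Trans b p)
    {Z : Set N.LVal} (hZ : N.lelapse Z ⊆ Z) :
    zonePost trb (zonePost tra Z) = zonePost tra (zonePost trb Z) :=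
  (zonePost_subset_swap hd hwa hwb hZ).antisymm (zonePost_subset_swap hd.symm hwb hwa hZ)

lemma StateStep.swap (hd : Disjoint (N.dom a) (N.dom b))
    {tra : N.TransFamily a} {trb : N.TransFamily b} {q q₁ q' : N.State}
    (ha : StateStep tra q q₁) (hb : StateStep trb q₁ q') :
    ∃ q₂, StateStep trb q q₂ ∧ StateStep tra q₂ q' := by
  have hab : ∀ p ∈ N.dom a, p ∉ N.dom b := fun _ h => Finset.disjoint_left.1 hd h
  have hba : ∀ p ∈ N.dom b, p ∉ N.dom a := fun _ h => Finset.disjoint_right.1 hd h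
  refine ⟨fun p => if p ∈ N.dom b then q' p else q p, ⟨fun p h => ?_, fun p hp => ?_⟩,
    ⟨fun p h => ?_, fun p hp => ?_⟩⟩
  · obtain ⟨htr, hsrc, htgt⟩ := hb.1 p h
    exact ⟨htr, hsrc.trans (ha.2 p (hba p h)), by simpa [h] using htgt⟩
  · simp [hp]
  · obtain ⟨htr, hsrc, htgt⟩ := ha.1 p h
    exact ⟨htr, by simpa [hab p h] using hsrc, htgt.trans (hb.2 p (hab p h)).symm⟩
  · by_cases hpb : p ∈ N.dom b
    · simp [hpb]
    · simpa [hpb] using (hb.2 p hpb).trans (ha.2 p hp)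

end Network

theorem stmt12_general (N : Network) (a b : N.Act) (hd : Disjoint (N.dom a) (N.dom b))
    (q q' : N.State) (Z Z' : Set N.LVal) (hte : Z = N.lelapse Z)
    (hr : N.LZRun [a, b] (q, Z) (q', Z')) : N.LZRun [b, a] (q, Z) (q', Z') := by
  obtain ⟨⟨q₁, Z₁⟩, ha, hb⟩ := Network.lzRun_pair_iff.1 hr
  obtain ⟨tra, hqa, rfl, -⟩ := Network.lzstep_iff.1 ha
  obtain ⟨trb, hqb, rfl, hne⟩ := Network.lzstep_iff.1 hb
  obtain ⟨q₂, hqb', hqa'⟩ := hqa.swap hd hqb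
  have hwa : ∀ p h, tra p h ∈ N.Trans a p := fun p h => (hqa.1 p h).1
  have hwb : ∀ p h, trb p h ∈ N.Trans b p := fun p h => (hqb.1 p h).1
  rw [Network.zonePost_comm hd hwa hwb hte.symm.subset] at hne ⊢
  exact Network.lzRun_pair_iff.2 ⟨(q₂, _),
    Network.lzstep_iff.2 ⟨trb, hqb', rfl, Network.nonempty_of_zonePost hne⟩,
    Network.lzstep_iff.2 ⟨tra, hqa', rfl, hne⟩⟩

theorem stmt12 (N : Network) (a b : N.Act) (hd : Disjoint (N.dom a) (N.dom b))
    (q q' : N.State) (Z Z' : Set N.LVal) (hZ : N.IsLZone Z) (hte : Z = N.lelapse Z)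
    (hr : N.LZRun [a, b] (q, Z) (q', Z')) : N.LZRun [b, a] (q, Z) (q', Z') :=
  stmt12_general N a b hd q q' Z Z' hte hr
end

section
/- Soundness of local sync graphs: if a node (q, Z) with Z nonempty is reachable from the initial node in a local sync graph of a network N, then state q is reachable by a run of N. -/
open Classical

/-!
A path in the sync graph is a path in the local zone graph, and every valuation in a
zone along such a path is reached by a local run, in which each process has its own
reference clock and processes synchronize only on common actions. Record the time at
which each action is taken. If two adjacent actions are taken in decreasing order of
time, they involve disjoint sets of processes, since reference clocks never decrease,
so they can be swapped. Insertion sort on the action times therefore yields a run whose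
actions occur in nondecreasing order of time, and such a run is a run of the
global-time semantics in which the global clock jumps from one action time to the next.
-/

namespace Network

variable {N : Network}

theorem ldelayed_iff_s17 {v v' : N.LVal} :
    N.ldelayed v v' ↔ (∀ x, v' (.inl x) = v (.inl x)) ∧ ∀ p, v (.inr p) ≤ v' (.inr p) := by
  constructor
  · rintro ⟨δ, hδ, rfl⟩
    exact ⟨fun _ => rfl, fun p => le_add_of_nonneg_right (hδ p)⟩
  · rintro ⟨hoff, hle⟩
    refine ⟨fun p => v' (.inr p) - v (.inr p), fun p => sub_nonneg.2 (hle p), ?_⟩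
    funext y
    cases y with
    | inl x => exact hoff x
    | inr p => exact (add_sub_cancel _ _).symm

theorem ldelayed_refl (v : N.LVal) : N.ldelayed v v :=
  ldelayed_iff_s17.2 ⟨fun _ => rfl, fun _ => le_rfl⟩

theorem ldelayed_trans {u v w : N.LVal} (h₁ : N.ldelayed u v) (h₂ : N.ldelayed v w) :
    N.ldelayed u w := by
  rw [ldelayed_iff_s17] at *
  exact ⟨fun x => (h₂.1 x).trans (h₁.1 x), fun p => (h₁.2 p).trans (h₂.2 p)⟩

theorem LRun.of_ldelayed {u : List N.Act} {q : N.State} {v v' : N.LVal}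
    {c : N.State × N.LVal} (hd : N.ldelayed v v') (h : N.LRun u (q, v') c) :
    N.LRun u (q, v) c := by
  cases h with
  | nil hd' => exact .nil (ldelayed_trans hd hd')
  | cons hd' hb h => exact .cons (ldelayed_trans hd hd') hb h

theorem LRunT.of_ldelayed {l : List (N.Act × ℝ)} {q : N.State} {v v' : N.LVal}
    {c : N.State × N.LVal} (hd : N.ldelayed v v') (h : N.LRunT l (q, v') c) :
    N.LRunT l (q, v) c := by
  cases h with
  | nil hd' => exact .nil (ldelayed_trans hd hd')
  | cons hd' hb hθ h => exact .cons (ldelayed_trans hd hd') hb hθ h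

def proc : N.LVar → Fin N.k
  | .inl x => N.owner x
  | .inr p => p

def vars (P : Finset (Fin N.k)) : Set N.LVar := {y | N.proc y ∈ P}

@[simp] theorem inl_mem_vars {P : Finset (Fin N.k)} {x : N.Clock} :
    (.inl x : N.LVar) ∈ N.vars P ↔ N.owner x ∈ P := Iff.rfl

@[simp] theorem inr_mem_vars {P : Finset (Fin N.k)} {p : Fin N.k} :
    (.inr p : N.LVar) ∈ N.vars P ↔ p ∈ P := Iff.rfl

section Transitions

variable {b : N.Act} {tr : ∀ p, p ∈ N.dom b → N.Loc p × Guard N.Clock × Set N.Clock × N.Loc p}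

theorem owner_eq_of_mem_guard (htr : ∀ p h, tr p h ∈ N.Trans b p) {p : Fin N.k}
    {hp : p ∈ N.dom b} {g : N.Clock × Cmp × ℤ} (hg : g ∈ (tr p hp).2.1) : N.owner g.1 = p :=
  (N.trans_wf b p _ (htr p hp)).1 g hg

theorem owner_mem_dom_of_mem_resets (htr : ∀ p h, tr p h ∈ N.Trans b p) {x : N.Clock}
    (hx : x ∈ {x | ∃ p h, x ∈ (tr p h).2.2.1}) : N.owner x ∈ N.dom b := by
  obtain ⟨p, hp, hx⟩ := hx
  rwa [(N.trans_wf b p _ (htr p hp)).2 x hx]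

end Transitions

namespace lact

variable {b : N.Act} {q q' : N.State} {v v' : N.LVal}

theorem loc_eq (h : N.lact b (q, v) (q', v')) {p : Fin N.k} (hp : p ∉ N.dom b) : q' p = q p :=
  h.choose_spec.2.1 p hp

theorem refClock_eq (h : N.lact b (q, v) (q', v')) (p : Fin N.k) : v' (.inr p) = v (.inr p) := by
  obtain ⟨tr, -, -, -, -, rfl⟩ := h
  rfl

theorem offset_eq (h : N.lact b (q, v) (q', v')) {x : N.Clock} (hx : N.owner x ∉ N.dom b) :
    v' (.inl x) = v (.inl x) := by
  obtain ⟨tr, htr, -, -, -, rfl⟩ := h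
  exact if_neg fun hR => hx (owner_mem_dom_of_mem_resets (fun p h => (htr p h).1) hR)

theorem exists_time (h : N.lact b (q, v) (q', v')) (hv : ∀ p, 0 ≤ v (.inr p)) :
    ∃ θ, 0 ≤ θ ∧ ∀ p ∈ N.dom b, v (.inr p) = θ := by
  rcases (N.dom b).eq_empty_or_nonempty with hb | ⟨p₀, hp₀⟩
  · exact ⟨0, le_rfl, by simp [hb]⟩
  · exact ⟨v (.inr p₀), hv p₀, fun p hp => h.choose_spec.2.2.1 p hp p₀ hp₀⟩

/-- A local action step only reads and writes the locations and variables of the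
processes in `dom b`: it can be replayed from any configuration that agrees there. -/
theorem frame (h : N.lact b (q, v) (q', v')) {q₀ : N.State} {v₀ : N.LVal}
    (hq : ∀ p ∈ N.dom b, q₀ p = q p) (hv : Set.EqOn v₀ v (N.vars (N.dom b))) :
    N.lact b (q₀, v₀) ((↑(N.dom b) : Set (Fin N.k)).piecewise q' q₀,
      (N.vars (N.dom b)).piecewise v' v₀) := by
  obtain ⟨tr, htr, hout, hsync, hg, rfl⟩ := h
  have htrans : ∀ p h, tr p h ∈ N.Trans b p := fun p h => (htr p h).1
  refine ⟨tr, fun p hp => ⟨(htr p hp).1, (htr p hp).2.1.trans (hq p hp).symm, ?_⟩,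
    fun p hp => Set.piecewise_eq_of_notMem _ _ _ hp, ?_, ?_, ?_⟩
  · rw [(htr p hp).2.2]
    exact (Set.piecewise_eq_of_mem _ _ _ (Finset.mem_coe.2 hp)).symm
  · intro p hp p' hp'
    dsimp only
    rw [hv (inr_mem_vars.2 hp), hv (inr_mem_vars.2 hp')]
    exact hsync p hp p' hp'
  · intro p hp g hgm
    have hown := owner_eq_of_mem_guard htrans hgm
    have hx : (.inl g.1 : N.LVar) ∈ N.vars (N.dom b) := by simpa [hown] using hp
    have hr : (.inr (N.owner g.1) : N.LVar) ∈ N.vars (N.dom b) := by simpa [hown] using hp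
    show Cmp.sat _ (v₀ _ - v₀ _) _
    rw [hv hx, hv hr]
    exact hg p hp g hgm
  · funext y
    dsimp only
    by_cases hy : y ∈ N.vars (N.dom b)
    · rw [Set.piecewise_eq_of_mem _ _ _ hy]
      cases y with
      | inl x =>
        simp only [lreset]
        rw [hv hy, hv (inr_mem_vars.2 (inl_mem_vars.1 hy))]
      | inr p => exact (hv hy).symm
    · rw [Set.piecewise_eq_of_notMem _ _ _ hy]
      cases y with
      | inl x => exact (if_neg fun hR => hy (owner_mem_dom_of_mem_resets htrans hR)).symm
      | inr p => rfl

end lact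

theorem disjoint_dom_of_lt {a b : N.Act} {q q₁ : N.State} {v₁ w₁ v₂ : N.LVal} {θa θb : ℝ}
    (ha : N.lact a (q, v₁) (q₁, w₁)) (hθa : ∀ p ∈ N.dom a, v₁ (.inr p) = θa)
    (hd : N.ldelayed w₁ v₂) (hθb : ∀ p ∈ N.dom b, v₂ (.inr p) = θb) (hlt : θb < θa) :
    Disjoint (N.dom a) (N.dom b) := by
  refine Finset.disjoint_left.2 fun p hpa hpb => hlt.not_ge ?_
  calc θa = w₁ (.inr p) := by rw [ha.refClock_eq, hθa p hpa]
    _ ≤ v₂ (.inr p) := (ldelayed_iff_s17.1 hd).2 p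
    _ = θb := hθb p hpb

/-- The `b`-step is replayed first, from a valuation in which the processes of `dom a`
and `dom b` have already reached their original times of action. -/
theorem lact_comm {a b : N.Act} {q q₁ q₂ : N.State} {v v₁ w₁ v₂ u₂ : N.LVal}
    (hab : Disjoint (N.dom a) (N.dom b)) (hd₁ : N.ldelayed v v₁) (ha : N.lact a (q, v₁) (q₁, w₁))
    (hd₂ : N.ldelayed w₁ v₂) (hb : N.lact b (q₁, v₂) (q₂, u₂)) :
    ∃ x₁ q₁' y₁ z, N.ldelayed v x₁ ∧ N.lact b (q, x₁) (q₁', y₁) ∧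
      Set.EqOn x₁ v₂ (N.vars (N.dom b)) ∧ N.lact a (q₁', y₁) (q₂, z) ∧
      Set.EqOn y₁ v₁ (N.vars (N.dom a)) ∧ N.ldelayed z u₂ := by
  obtain ⟨hoff₁, hle₁⟩ := ldelayed_iff_s17.1 hd₁
  obtain ⟨hoff₂, hle₂⟩ := ldelayed_iff_s17.1 hd₂
  have hoff : ∀ x, N.owner x ∉ N.dom a → v₂ (.inl x) = v (.inl x) := fun x hx => by
    rw [hoff₂, ha.offset_eq hx, hoff₁]
  have hle : ∀ p, v₁ (.inr p) ≤ u₂ (.inr p) := fun p => by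
    rw [hb.refClock_eq, ← ha.refClock_eq]
    exact hle₂ p
  have hvars : ∀ {y}, y ∈ N.vars (N.dom a) → y ∉ N.vars (N.dom b) :=
    fun hy => Finset.disjoint_left.1 hab hy
  set x₁ := (N.vars (N.dom b)).piecewise v₂ ((N.vars (N.dom a)).piecewise v₁ v)
  have hx₁ : Set.EqOn x₁ v₂ (N.vars (N.dom b)) := Set.piecewise_eqOn _ _ _
  have hx₁a : Set.EqOn x₁ v₁ (N.vars (N.dom a)) := fun y hy => by
    simp only [x₁, Set.piecewise_eq_of_notMem _ _ _ (hvars hy), Set.piecewise_eq_of_mem _ _ _ hy]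
  set y₁ := (N.vars (N.dom b)).piecewise u₂ x₁
  have hy₁ : Set.EqOn y₁ v₁ (N.vars (N.dom a)) := fun y hy => by
    simp only [y₁, Set.piecewise_eq_of_notMem _ _ _ (hvars hy), hx₁a hy]
  have hb' := hb.frame (q₀ := q) (fun p hp => (ha.loc_eq (Finset.disjoint_right.1 hab hp)).symm) hx₁
  have ha' := ha.frame (q₀ := (↑(N.dom b) : Set (Fin N.k)).piecewise q₂ q)
    (fun p hp => Set.piecewise_eq_of_notMem _ _ _ (Finset.disjoint_left.1 hab hp)) hy₁
  have hq₂ : (↑(N.dom a) : Set (Fin N.k)).piecewise q₁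
      ((↑(N.dom b) : Set (Fin N.k)).piecewise q₂ q) = q₂ := by
    funext p
    by_cases hpa : p ∈ N.dom a
    · rw [Set.piecewise_eq_of_mem _ _ _ hpa, hb.loc_eq (Finset.disjoint_left.1 hab hpa)]
    · rw [Set.piecewise_eq_of_notMem _ _ _ hpa]
      by_cases hpb : p ∈ N.dom b
      · exact Set.piecewise_eq_of_mem _ _ _ hpb
      · rw [Set.piecewise_eq_of_notMem _ _ _ hpb, hb.loc_eq hpb, ha.loc_eq hpa]
  rw [hq₂] at ha'
  refine ⟨x₁, _, y₁, _, ?_, hb', hx₁, ha', hy₁, ?_⟩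
  · refine ldelayed_iff_s17.2 ⟨fun x => ?_, fun p => ?_⟩ <;>
      simp only [x₁, Set.piecewise, inl_mem_vars, inr_mem_vars] <;> split_ifs with h₁ h₂
    · exact hoff x (Finset.disjoint_right.1 hab h₁)
    · exact hoff₁ x
    · rfl
    · exact (hle₁ p).trans ((hle p).trans_eq (hb.refClock_eq p))
    · exact hle₁ p
    · exact le_rfl
  · refine ldelayed_iff_s17.2 ⟨fun x => ?_, fun p => ?_⟩ <;>
      simp only [y₁, x₁, Set.piecewise, inl_mem_vars, inr_mem_vars] <;> split_ifs with h₁ h₂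
    · rw [hb.offset_eq (Finset.disjoint_left.1 hab h₁), hoff₂]
    · rfl
    · rw [hb.offset_eq h₂, hoff x h₁]
    · exact (ha.refClock_eq p).trans_le (hle p)
    · exact le_rfl
    · exact (hle₁ p).trans (hle p)

namespace LRunT

theorem swap {a b : N.Act} {θa θb : ℝ} {l : List (N.Act × ℝ)} {c c' : N.State × N.LVal}
    (h : N.LRunT ((a, θa) :: (b, θb) :: l) c c') (hlt : θb < θa) :
    N.LRunT ((b, θb) :: (a, θa) :: l) c c' := by
  obtain ⟨q, v⟩ := c
  obtain _ | ⟨hd₁, ha, hθa, h⟩ := h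
  rename_i v₁ c₁
  obtain ⟨q₁, w₁⟩ := c₁
  obtain _ | ⟨hd₂, hb, hθb, h⟩ := h
  rename_i v₂ c₂
  obtain ⟨q₂, u₂⟩ := c₂
  obtain ⟨x₁, q₁', y₁, z, hx₁, hb', hx₁b, ha', hy₁a, hz⟩ :=
    lact_comm (disjoint_dom_of_lt ha hθa hd₂ hθb hlt) hd₁ ha hd₂ hb
  exact .cons hx₁ hb' (fun p hp => (hx₁b (inr_mem_vars.2 hp)).trans (hθb p hp))
    (.cons (ldelayed_refl y₁) ha' (fun p hp => (hy₁a (inr_mem_vars.2 hp)).trans (hθa p hp))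
      (of_ldelayed hz h))

theorem orderedInsert {e : N.Act × ℝ} {l : List (N.Act × ℝ)} {c c' : N.State × N.LVal}
    (h : N.LRunT (e :: l) c c') : N.LRunT (l.orderedInsert (fun e f => e.2 ≤ f.2) e) c c' := by
  induction l generalizing c with
  | nil => exact h
  | cons f l ih =>
    by_cases hef : e.2 ≤ f.2
    · rwa [List.orderedInsert_cons, if_pos hef]
    · rw [List.orderedInsert_cons, if_neg hef]
      obtain _ | ⟨hd, hb, hθ, h⟩ := swap h (not_le.1 hef)
      exact .cons hd hb hθ (ih h)

theorem insertionSort {l : List (N.Act × ℝ)} {c c' : N.State × N.LVal} (h : N.LRunT l c c') :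
    N.LRunT (l.insertionSort (fun e f => e.2 ≤ f.2)) c c' := by
  induction h with
  | nil hd => exact .nil hd
  | cons hd hb hθ _ ih => exact orderedInsert (.cons hd hb hθ ih)

end LRunT

theorem lact.exists_gact {b : N.Act} {q q' : N.State} {v v' : N.LVal}
    (h : N.lact b (q, v) (q', v')) {w : N.GVal}
    (href : ∀ p ∈ N.dom b, v (.inr p) = w (.inr ())) (hoff : ∀ x, v (.inl x) = w (.inl x)) :
    ∃ w', N.gact b (q, w) (q', w') ∧ (∀ x, v' (.inl x) = w' (.inl x)) ∧
      w' (.inr ()) = w (.inr ()) := by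
  obtain ⟨tr, htr, hout, -, hg, rfl⟩ := h
  have htrans : ∀ p h, tr p h ∈ N.Trans b p := fun p h => (htr p h).1
  refine ⟨_, ⟨tr, htr, hout, fun p hp g hgm => ?_, rfl⟩, fun x => ?_, rfl⟩
  · have hown := owner_eq_of_mem_guard htrans hgm
    have := hg p hp g hgm
    dsimp only [lgsat] at this
    rwa [hown, href p hp, hoff] at this
  · dsimp only [lreset, greset]
    split_ifs with hR
    · exact href _ (owner_mem_dom_of_mem_resets htrans hR)
    · exact hoff x

theorem LRunT.exists_gRun {l : List (N.Act × ℝ)} {c c' : N.State × N.LVal}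
    (h : N.LRunT l c c') (hl : l.Pairwise (fun e f => e.2 ≤ f.2)) {w : N.GVal}
    (hoff : ∀ x, c.2 (.inl x) = w (.inl x)) (hle : ∀ e ∈ l, w (.inr ()) ≤ e.2) :
    ∃ w', N.GRun (l.map Prod.fst) (c.1, w) (c'.1, w') := by
  induction h generalizing w with
  | nil _ => exact ⟨_, .nil 0 le_rfl⟩
  | @cons _ θ _ _ _ _ _ _ hd hb hθ _ ih =>
    obtain ⟨hle_head, hl⟩ := List.pairwise_cons.1 hl
    set δ := θ - w (.inr ())
    have hdelay : N.gdelay w δ (.inr ()) = θ := add_sub_cancel _ _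
    obtain ⟨w₁, hg, hoff₁, hw₁⟩ := hb.exists_gact (w := N.gdelay w δ)
      (fun p hp => (hθ p hp).trans hdelay.symm)
      (fun x => ((ldelayed_iff_s17.1 hd).1 x).trans (hoff x))
    obtain ⟨w', hrun⟩ := ih hl hoff₁ fun e he => (hw₁.trans hdelay).trans_le (hle_head e he)
    exact ⟨w', .cons δ (sub_nonneg.2 (hle _ List.mem_cons_self)) hg hrun⟩

theorem LRun.exists_lRunT {u : List N.Act} {c c' : N.State × N.LVal} (h : N.LRun u c c')
    (hnn : ∀ p, 0 ≤ c.2 (.inr p)) :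
    ∃ l : List (N.Act × ℝ), (∀ e ∈ l, 0 ≤ e.2) ∧ N.LRunT l c c' := by
  induction h with
  | nil hd => exact ⟨[], by simp, .nil hd⟩
  | cons hd hb _ ih =>
    have hnn₁ := fun p => (hnn p).trans ((ldelayed_iff_s17.1 hd).2 p)
    obtain ⟨θ, hθ, hθb⟩ := hb.exists_time hnn₁
    obtain ⟨l, hl, hrun⟩ := ih fun p => (hb.refClock_eq p).symm ▸ hnn₁ p
    exact ⟨_ :: l, List.forall_mem_cons.2 ⟨hθ, hl⟩, .cons hd hb hθb hrun⟩

theorem LReach.gReach {q : N.State} (h : N.LReach q) : N.GReach q := by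
  obtain ⟨u, v, hrun⟩ := h
  obtain ⟨l, hl, hrunT⟩ := hrun.exists_lRunT fun _ => le_rfl
  have : Std.Total (fun e f : N.Act × ℝ => e.2 ≤ f.2) := ⟨fun e f => le_total e.2 f.2⟩
  have : IsTrans (N.Act × ℝ) (fun e f => e.2 ≤ f.2) := ⟨fun _ _ _ => le_trans⟩
  obtain ⟨w, hg⟩ := hrunT.insertionSort.exists_gRun (List.pairwise_insertionSort _ l)
    (w := N.gvalInit) (fun _ => rfl) fun e he => hl e (List.mem_insertionSort _ |>.1 he)
  exact ⟨_, w, hg⟩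

theorem lzstep.exists_lact {b : N.Act} {c c' : N.State × Set N.LVal} (h : N.lzstep b c c')
    {v' : N.LVal} (hv' : v' ∈ c'.2) :
    ∃ v ∈ c.2, ∃ v₁, N.lact b (c.1, v) (c'.1, v₁) ∧ N.ldelayed v₁ v' := by
  obtain ⟨tr, htr, hout, hZ, -⟩ := h
  rw [hZ] at hv'
  obtain ⟨_, ⟨v, ⟨⟨hv, hg⟩, hsync⟩, rfl⟩, hd⟩ := hv'
  exact ⟨v, hv, _, ⟨tr, htr, hout, hsync, hg, rfl⟩, hd⟩

theorem LZRun.exists_lRun {u : List N.Act} {c c' : N.State × Set N.LVal} (h : N.LZRun u c c')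
    {v' : N.LVal} (hv' : v' ∈ c'.2) : ∃ v ∈ c.2, N.LRun u (c.1, v) (c'.1, v') := by
  induction h with
  | nil => exact ⟨v', hv', .nil (ldelayed_refl v')⟩
  | cons hb _ ih =>
    obtain ⟨v₁, hv₁, hrun⟩ := ih hv'
    obtain ⟨v, hv, v₀, hb', hd⟩ := hb.exists_lact hv₁
    exact ⟨v, hv, .cons (ldelayed_refl v) hb' (LRun.of_ldelayed hd hrun)⟩

theorem LZRun.lReach {u : List N.Act} {q : N.State} {Z : Set N.LVal}
    (h : N.LZRun u (N.initState, N.lzoneInit) (q, Z)) (hZ : Z.Nonempty) : N.LReach q := by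
  obtain ⟨v', hv'⟩ := hZ
  obtain ⟨v, ⟨_, rfl, hd⟩, hrun⟩ := h.exists_lRun hv'
  exact ⟨u, v', LRun.of_ldelayed hd hrun⟩

end Network

theorem SyncGraph.exists_lzRun {N : Network} {abs : Set N.GVal → Set N.GVal} (G : SyncGraph N abs)
    {s t : N.State × Set N.LVal} (h : Relation.ReflTransGen G.edges s t) :
    ∃ u, N.LZRun u s t := by
  induction h using Relation.ReflTransGen.head_induction_on with
  | refl => exact ⟨[], .nil _⟩
  | head hst _ ih =>
    obtain ⟨u, hu⟩ := ih
    obtain ⟨b, hb⟩ := G.edges_lzg _ _ hst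
    exact ⟨b :: u, .cons hb hu⟩

theorem stmt17_general (N : Network) (abs : Set N.GVal → Set N.GVal) (G : SyncGraph N abs)
    (q : N.State) (Z : Set N.LVal)
    (hreach : Relation.ReflTransGen G.edges (N.initState, N.lzoneInit) (q, Z))
    (hne : Z.Nonempty) : N.GReach q := by
  obtain ⟨u, hu⟩ := G.exists_lzRun hreach
  exact (hu.lReach hne).gReach

theorem stmt17 (N : Network) (abs : Set N.GVal → Set N.GVal) (G : SyncGraph N abs)
    (q : N.State) (Z : Set N.LVal) (hmem : (q, Z) ∈ G.nodes)
    (hreach : Relation.ReflTransGen G.edges (N.initState, N.lzoneInit) (q, Z))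
    (hne : Z.Nonempty) : N.GReach q :=
  stmt17_general N abs G q Z hreach hne
end

section
/- Completeness of local sync graphs: if state q is reachable by a global run of the network N, then some node (q, Z) with Z nonempty is reachable from the initial node in every local sync graph of N based on an abstraction induced by a time-abstract simulation. -/
open Classical

/-! Along a global run, keep an uncovered node `(q, Z)` and a synchronized `v ∈ Z` whose global
view is reachable from the current global valuation by a chain of simulation steps. A global
delay-action step is replayed locally by delaying all reference clocks of `v` together, which
stays in `Z` because zones of the graph are closed under local delays; the resulting local zone
successor is reached by an edge since `(q, Z)` is uncovered. If the successor is covered, condition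
C4 moves the synchronized valuation to a subsuming uncovered node at the price of one more
simulation step. As `≼` need not be transitive, the invariant uses chains of simulation steps,
which again form a time-abstract simulation. -/

namespace Network

variable {N : Network}

theorem ldelayed.trans {v₁ v₂ v₃ : N.LVal} (h₁ : N.ldelayed v₁ v₂) (h₂ : N.ldelayed v₂ v₃) :
    N.ldelayed v₁ v₃ := by
  obtain ⟨δ₁, hδ₁, rfl⟩ := h₁
  obtain ⟨δ₂, hδ₂, rfl⟩ := h₂
  refine ⟨δ₁ + δ₂, fun p => add_nonneg (hδ₁ p) (hδ₂ p), ?_⟩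
  funext y; cases y <;> simp [add_assoc]

theorem mem_lelapse_of_ldelayed {S : Set N.LVal} {v u : N.LVal} (hv : v ∈ N.lelapse S)
    (hd : N.ldelayed v u) : u ∈ N.lelapse S :=
  let ⟨v₀, hv₀, hd₀⟩ := hv
  ⟨v₀, hv₀, hd₀.trans hd⟩

theorem toGlobal_toLocal (g : N.GVal) : N.toGlobal (N.toLocal g) = g := by
  funext y; cases y <;> rfl

theorem synchronized_toLocal (g : N.GVal) : N.Synchronized (N.toLocal g) := fun _ _ => rfl

theorem Synchronized.toLocal_toGlobal {v : N.LVal} (hv : N.Synchronized v) :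
    N.toLocal (N.toGlobal v) = v := by
  funext y
  cases y with
  | inl x => rfl
  | inr p => exact hv _ p

theorem ldelayed_toLocal_gdelay (g : N.GVal) {δ : ℝ} (hδ : 0 ≤ δ) :
    N.ldelayed (N.toLocal g) (N.toLocal (N.gdelay g δ)) :=
  ⟨fun _ => δ, fun _ => hδ, by funext y; cases y <;> rfl⟩

theorem lreset_toLocal (R : Set N.Clock) (g : N.GVal) :
    N.lreset R (N.toLocal g) = N.toLocal (N.greset R g) := by
  funext y; cases y <;> rfl

theorem gact.lact_toLocal {b : N.Act} {q q' : N.State} {g g' : N.GVal}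
    (h : N.gact b (q, g) (q', g')) : N.lact b (q, N.toLocal g) (q', N.toLocal g') := by
  obtain ⟨tr, htr, hout, hguard, rfl⟩ := h
  exact ⟨tr, htr, hout, fun _ _ _ _ => rfl, hguard, (lreset_toLocal _ _).symm⟩

theorem exists_lzstep_of_lact {b : N.Act} {q q' : N.State} {Z : Set N.LVal} {v v' : N.LVal}
    (hv : v ∈ Z) (h : N.lact b (q, v) (q', v')) :
    ∃ Z', N.lzstep b (q, Z) (q', Z') ∧ v' ∈ Z' := by
  obtain ⟨tr, htr, hout, hsync, hguard, rfl⟩ := h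
  have hmem : N.lreset {x | ∃ p h, x ∈ (tr p h).2.2.1} v ∈ N.lelapse
      (N.lreset {x | ∃ p h, x ∈ (tr p h).2.2.1} ''
        (Z ∩ {w | ∀ p (h : p ∈ N.dom b), N.lgsat w (tr p h).2.1}
           ∩ {w | ∀ p ∈ N.dom b, ∀ p' ∈ N.dom b, w (.inr p) = w (.inr p')})) :=
    ⟨_, ⟨v, ⟨⟨hv, hguard⟩, hsync⟩, rfl⟩, ldelayed_refl _⟩
  exact ⟨_, ⟨tr, htr, hout, rfl, _, hmem⟩, hmem⟩

theorem TASim.reflTransGen {sim : N.GVal → N.GVal → Prop} (hsim : N.TASim sim) :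
    N.TASim (Relation.ReflTransGen sim) := by
  intro v₁ v₂ h
  induction h with
  | refl => exact fun _ _ δ₁ _ v₁' hδ₁ hact => ⟨δ₁, hδ₁, v₁', hact, .refl⟩
  | tail _ hlast ih =>
    intro q b δ₁ q' v₁' hδ₁ hact
    obtain ⟨δ, hδ, w', hw', hchain⟩ := ih q b δ₁ q' v₁' hδ₁ hact
    obtain ⟨δ₂, hδ₂, v₂', hv₂', hsim'⟩ := hsim _ _ hlast q b δ q' w' hδ hw'
    exact ⟨δ₂, hδ₂, v₂', hv₂', hchain.tail hsim'⟩

end Network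

namespace SyncGraph

variable {N : Network}

theorem mem_of_ldelayed {abs : Set N.GVal → Set N.GVal} (G : SyncGraph N abs)
    {s : N.State × Set N.LVal} (hs : s ∈ G.nodes) {v u : N.LVal} (hv : v ∈ s.2)
    (hd : N.ldelayed v u) : u ∈ s.2 := by
  rcases (G.reach s hs).cases_tail with rfl | ⟨_, _, hedge⟩
  · exact N.mem_lelapse_of_ldelayed hv hd
  · obtain ⟨_, _, _, _, hZ, _⟩ := G.edges_lzg _ _ hedge
    rw [hZ] at hv ⊢
    exact N.mem_lelapse_of_ldelayed hv hd

theorem exists_lzstep_of_gact {abs : Set N.GVal → Set N.GVal} (G : SyncGraph N abs)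
    {q q' : N.State} {Z : Set N.LVal} (hs : (q, Z) ∈ G.nodes) {v : N.LVal}
    (hv : v ∈ N.syncSet Z) {b : N.Act} {δ : ℝ} (hδ : 0 ≤ δ) {g' : N.GVal}
    (hact : N.gact b (q, N.gdelay (N.toGlobal v) δ) (q', g')) :
    ∃ Z', N.lzstep b (q, Z) (q', Z') ∧ N.toLocal g' ∈ N.syncSet Z' := by
  have hdelayed : N.toLocal (N.gdelay (N.toGlobal v) δ) ∈ Z := by
    refine G.mem_of_ldelayed hs hv.1 ?_
    simpa only [hv.2.toLocal_toGlobal] using N.ldelayed_toLocal_gdelay (N.toGlobal v) hδ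
  obtain ⟨Z', hstep, hmem⟩ := N.exists_lzstep_of_lact hdelayed hact.lact_toLocal
  exact ⟨Z', hstep, hmem, N.synchronized_toLocal g'⟩

variable {sim : N.GVal → N.GVal → Prop} (G : SyncGraph N (fun W => {v | ∃ v' ∈ W, sim v v'}))

theorem exists_uncovered_of_mem {s : N.State × Set N.LVal} (hs : s ∈ G.nodes) {v : N.LVal}
    (hv : v ∈ N.syncSet s.2) :
    ∃ Z, (s.1, Z) ∈ G.nodes ∧ ¬ G.covered (s.1, Z) ∧
      ∃ v' ∈ N.syncSet Z, Relation.ReflTransGen sim (N.toGlobal v) (N.toGlobal v') := by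
  by_cases hcov : G.covered s
  · obtain ⟨⟨q', Z⟩, hs', hunc, rfl, hsub⟩ := G.cov_sub s hs hcov
    obtain ⟨_, ⟨v', hv', rfl⟩, hsim⟩ := hsub ⟨v, hv, rfl⟩
    exact ⟨Z, hs', hunc, v', hv', .single hsim⟩
  · exact ⟨s.2, hs, hcov, v, hv, .refl⟩

theorem exists_reachable_of_gRun (hsim : N.TASim sim) {u : List N.Act}
    {c c' : N.State × N.GVal} (hrun : N.GRun u c c') {Z : Set N.LVal}
    (hs : (c.1, Z) ∈ G.nodes) (hunc : ¬ G.covered (c.1, Z)) {v : N.LVal}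
    (hv : v ∈ N.syncSet Z) (hchain : Relation.ReflTransGen sim c.2 (N.toGlobal v)) :
    ∃ Z', Z'.Nonempty ∧ (c'.1, Z') ∈ G.nodes ∧
      Relation.ReflTransGen G.edges (N.initState, N.lzoneInit) (c'.1, Z') := by
  induction hrun generalizing Z v with
  | nil => exact ⟨Z, ⟨v, hv.1⟩, hs, G.reach _ hs⟩
  | @cons b _ q _ c₁ _ δ hδ hact _ ih =>
    obtain ⟨δ₂, hδ₂, g₁, hact₂, hchain₁⟩ := hsim.reflTransGen _ _ hchain q b δ c₁.1 c₁.2 hδ hact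
    obtain ⟨Z₁, hstep, hv₁⟩ := G.exists_lzstep_of_gact hs hv hδ₂ hact₂
    have hs₁ := (G.edges_mem _ _ (G.unc_succ _ hs hunc b _ hstep)).2
    obtain ⟨Z₂, hs₂, hunc₂, v₂, hv₂, hchain₂⟩ := G.exists_uncovered_of_mem hs₁ hv₁
    rw [N.toGlobal_toLocal] at hchain₂
    exact ih hs₂ hunc₂ hv₂ (hchain₁.trans hchain₂)

end SyncGraph

theorem stmt18_general (N : Network) (sim : N.GVal → N.GVal → Prop) (hsim : N.TASim sim)
    (G : SyncGraph N (fun W => {v | ∃ v' ∈ W, sim v v'}))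
    (q : N.State) (hq : N.GReach q) :
    ∃ Z : Set N.LVal, Z.Nonempty ∧ (q, Z) ∈ G.nodes ∧
      Relation.ReflTransGen G.edges (N.initState, N.lzoneInit) (q, Z) := by
  obtain ⟨_, _, hrun⟩ := hq
  have hinit : N.lvalInit ∈ N.syncSet N.lzoneInit :=
    ⟨⟨N.lvalInit, rfl, N.ldelayed_refl _⟩, fun _ _ => rfl⟩
  have hglobal : N.toGlobal N.lvalInit = N.gvalInit := by funext y; cases y <;> rfl
  exact G.exists_reachable_of_gRun hsim hrun G.init_mem G.init_unc hinit (hglobal ▸ .refl)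

theorem stmt18 (N : Network) (sim : N.GVal → N.GVal → Prop) (hsim : N.TASim sim)
    (hrefl : ∀ v, sim v v)
    (G : SyncGraph N (fun W => {v | ∃ v' ∈ W, sim v v'}))
    (q : N.State) (hq : N.GReach q) :
    ∃ Z : Set N.LVal, Z.Nonempty ∧ (q, Z) ∈ G.nodes ∧
      Relation.ReflTransGen G.edges (N.initState, N.lzoneInit) (q, Z) :=
  stmt18_general N sim hsim G q hq
end
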